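/- arXiv:nlin/0007017 — 3 statements merged into one kernel-verified Lean document; each statement's English description precedes it below -/
import Mathlib

section
/- Let n ≥ 2 be an integer. There is no pair of multi-indices (Θ, θ) ∈ ℕ^{n-1} × ℕ^{n-1} such that |Θ| + |θ| = 3, ν(Θ, θ) = 0, and μ(Θ, θ) ≡ 0 (mod n). -/
/-!
STATEMENT 0: Let n ≥ 2. There is no pair of multi-indices (Θ, θ) ∈ ℕ^{n-1} × ℕ^{n-1}
with |Θ| + |θ| = 3, ν(Θ, θ) = 0 and μ(Θ, θ) ≡ 0 (mod n).
-/

/-- The eigenvalues `ω_j = 2 sin(jπ/n)` of the linear periodic FPU problem. -/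
noncomputable def omg (n j : ℕ) : ℝ := 2 * Real.sin (j * Real.pi / n)

/-- `ν(Θ, θ) = Σ_{1 ≤ j < n/2} ω_j (θ_j − θ_{n-j} − Θ_j + Θ_{n-j}) + ω_{n/2} (θ_{n/2} − Θ_{n/2})`,
the last term being present only when `n` is even. -/
noncomputable def nuF (n : ℕ) (Θ θ : ℕ → ℕ) : ℝ :=
  (∑ j ∈ (Finset.Ico 1 n).filter (fun j => 2 * j < n),
      omg n j * ((θ j : ℝ) - θ (n - j) - Θ j + Θ (n - j)))
  + (if 2 ∣ n then omg n (n / 2) * ((θ (n / 2) : ℝ) - Θ (n / 2)) else 0)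

/-- `μ(Θ, θ) = Σ_{1 ≤ j < n/2} j (Θ_j + Θ_{n-j} − θ_j − θ_{n-j}) + (n/2)(Θ_{n/2} − θ_{n/2})`,
the last term being present only when `n` is even. -/
def muF (n : ℕ) (Θ θ : ℕ → ℕ) : ℤ :=
  (∑ j ∈ (Finset.Ico 1 n).filter (fun j => 2 * j < n),
      (j : ℤ) * ((Θ j : ℤ) + Θ (n - j) - θ j - θ (n - j)))
  + (if 2 ∣ n then ((n / 2 : ℕ) : ℤ) * ((Θ (n / 2) : ℤ) - θ (n / 2)) else 0)


open Real


lemma split_sum {M : Type*} [AddCommMonoid M] (n : ℕ) (hn : 2 ≤ n) (f : ℕ → M) :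
    ∑ j ∈ Finset.Icc 1 (n-1), f j =
      (∑ j ∈ (Finset.Ico 1 n).filter (fun j => 2*j < n), (f j + f (n - j)))
      + (if 2 ∣ n then f (n/2) else 0) := by
  have hIco : Finset.Ico 1 n = Finset.Icc 1 (n-1) := by
    rw [← Finset.Ico_add_one_right_eq_Icc]
    congr 1
    omega
  rw [← hIco]
  rw [← Finset.sum_filter_add_sum_filter_not (Finset.Ico 1 n) (fun j => 2*j < n) f]
  rw [← Finset.sum_filter_add_sum_filter_not
      ((Finset.Ico 1 n).filter (fun j => ¬ 2*j < n)) (fun j => 2*j = n) f]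
  rw [Finset.filter_filter, Finset.filter_filter]
  have hmid : ∑ j ∈ (Finset.Ico 1 n).filter (fun j => ¬ 2*j < n ∧ 2*j = n), f j
      = (if 2 ∣ n then f (n/2) else 0) := by
    by_cases h2 : 2 ∣ n
    · rw [if_pos h2]
      have : (Finset.Ico 1 n).filter (fun j => ¬ 2*j < n ∧ 2*j = n) = {n/2} := by
        ext j
        simp only [Finset.mem_filter, Finset.mem_Ico, Finset.mem_singleton]
        omega
      rw [this, Finset.sum_singleton]
    · rw [if_neg h2]
      have : (Finset.Ico 1 n).filter (fun j => ¬ 2*j < n ∧ 2*j = n) = ∅ := by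
        ext j
        simp only [Finset.mem_filter, Finset.mem_Ico, Finset.notMem_empty, iff_false]
        omega
      rw [this, Finset.sum_empty]
  have hbij : ∑ j ∈ (Finset.Ico 1 n).filter (fun j => ¬ 2*j < n ∧ ¬ 2*j = n), f j
      = ∑ j ∈ (Finset.Ico 1 n).filter (fun j => 2*j < n), f (n - j) := by
    apply Finset.sum_nbij' (fun j => n - j) (fun j => n - j)
    · intro a ha
      simp only [Finset.mem_filter, Finset.mem_Ico] at ha ⊢
      omega
    · intro a ha
      simp only [Finset.mem_filter, Finset.mem_Ico] at ha ⊢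
      omega
    · intro a ha
      simp only [Finset.mem_filter, Finset.mem_Ico] at ha
      omega
    · intro a ha
      simp only [Finset.mem_filter, Finset.mem_Ico] at ha
      omega
    · intro a ha
      simp only [Finset.mem_filter, Finset.mem_Ico] at ha
      congr 1
      omega
  rw [hmid, hbij, Finset.sum_add_distrib]
  abel


lemma trig1 (a b : ℝ) : Real.sin (2*a) + Real.sin (2*b) - Real.sin (2*a + 2*b)
    = 4 * Real.sin a * Real.sin b * Real.sin (a + b) := by
  have h1 := Real.sin_sq_add_cos_sq a
  have h2 := Real.sin_sq_add_cos_sq b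
  rw [Real.sin_two_mul, Real.sin_two_mul, show 2*a+2*b = (a+b)+(a+b) by ring,
    Real.sin_add (a+b), Real.sin_add a b, Real.cos_add a b]
  linear_combination (-2*Real.sin b*Real.cos b)*h1 + (-2*Real.sin a*Real.cos a)*h2

lemma trig2 (a b : ℝ) : Real.sin (2*a) + Real.sin (2*b) + Real.sin (2*a + 2*b)
    = 4 * Real.sin (a + b) * Real.cos a * Real.cos b := by
  have h1 := Real.sin_sq_add_cos_sq a
  have h2 := Real.sin_sq_add_cos_sq b
  rw [Real.sin_two_mul, Real.sin_two_mul, show 2*a+2*b = (a+b)+(a+b) by ring,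
    Real.sin_add (a+b), Real.sin_add a b, Real.cos_add a b]
  linear_combination (-2*Real.sin b*Real.cos b)*h1 + (-2*Real.sin a*Real.cos a)*h2

lemma sin_ne (n : ℕ) (hn : 2 ≤ n) (x : ℤ) (hx : ¬ (n:ℤ) ∣ x) :
    Real.sin ((x:ℝ) * π / (2*(n:ℝ))) ≠ 0 := by
  have hn0 : (n:ℝ) ≠ 0 := by positivity
  intro h
  rw [Real.sin_eq_zero_iff] at h
  obtain ⟨k, hk⟩ := h
  apply hx
  have hpi := Real.pi_ne_zero
  have : (x:ℝ) = 2*(n:ℝ)*(k:ℝ) := by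
    field_simp at hk
    have h2 : (x:ℝ)*π = (2*(n:ℝ)*(k:ℝ))*π := by linear_combination (-π)*hk
    exact mul_right_cancel₀ hpi h2
  have : x = 2*(n:ℤ)*k := by exact_mod_cast this
  exact ⟨2*k, by linarith⟩

lemma cos_ne (n : ℕ) (hn : 2 ≤ n) (x : ℤ) (hx : ¬ (n:ℤ) ∣ x) :
    Real.cos ((x:ℝ) * π / (2*(n:ℝ))) ≠ 0 := by
  have hn0 : (n:ℝ) ≠ 0 := by positivity
  intro h
  rw [Real.cos_eq_zero_iff] at h
  obtain ⟨k, hk⟩ := h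
  apply hx
  have hpi := Real.pi_ne_zero
  have : (x:ℝ) = (n:ℝ)*(2*(k:ℝ)+1) := by
    field_simp at hk
    have h2 : (x:ℝ)*π = ((n:ℝ)*(2*(k:ℝ)+1))*π := by linear_combination π*hk
    exact mul_right_cancel₀ hpi h2
  have : x = (n:ℤ)*(2*k+1) := by exact_mod_cast this
  exact ⟨2*k+1, this⟩

lemma core (n : ℕ) (hn : 2 ≤ n) (x y z : ℤ)
    (hx : ¬ (n:ℤ) ∣ x) (hy : ¬ (n:ℤ) ∣ y) (hz : ¬ (n:ℤ) ∣ z)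
    (hd : (n:ℤ) ∣ x + y + z)
    (hs : Real.sin ((x:ℝ)*π/(n:ℝ)) + Real.sin ((y:ℝ)*π/(n:ℝ)) + Real.sin ((z:ℝ)*π/(n:ℝ)) = 0) :
    False := by
  have hn0 : (n:ℝ) ≠ 0 := by positivity
  obtain ⟨k, hk⟩ := hd
  set a : ℝ := (x:ℝ)*π/(2*(n:ℝ)) with ha
  set b : ℝ := (y:ℝ)*π/(2*(n:ℝ)) with hb
  have hxa : (x:ℝ)*π/(n:ℝ) = 2*a := by rw [ha]; field_simp
  have hyb : (y:ℝ)*π/(n:ℝ) = 2*b := by rw [hb]; field_simp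
  have hzr : (z:ℝ)*π/(n:ℝ) = (k:ℝ)*π - (2*a + 2*b) := by
    have hz' : (z:ℝ) = (k:ℝ)*(n:ℝ) - (x:ℝ) - (y:ℝ) := by
      have : (z:ℤ) = k*n - x - y := by linarith [hk]
      exact_mod_cast congrArg (Int.cast : ℤ → ℝ) this
    rw [ha, hb, hz']
    field_simp
    ring
  -- n ∤ x + y
  have hxy : ¬ (n:ℤ) ∣ x + y := by
    intro ⟨m, hm⟩
    exact hz ⟨k - m, by linarith [hk, hm]⟩
  have hab : Real.sin (a + b) ≠ 0 := by
    have : a + b = ((x+y : ℤ):ℝ)*π/(2*(n:ℝ)) := by push_cast; rw [ha, hb]; ring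
    rw [this]; exact sin_ne n hn (x+y) hxy
  rw [hxa, hyb, hzr] at hs
  rcases Int.even_or_odd k with ⟨m, hm⟩ | ⟨m, hm⟩
  · -- k even: sin(kπ - t) = sin(-t) = -sin t
    have : Real.sin ((k:ℝ)*π - (2*a+2*b)) = - Real.sin (2*a+2*b) := by
      have : (k:ℝ)*π - (2*a+2*b) = -(2*a+2*b) + (m:ℝ)*(2*π) := by
        have : (k:ℝ) = 2*(m:ℝ) := by
          have : k = 2*m := by omega
          exact_mod_cast this
        rw [this]; ring
      rw [this, Real.sin_add_int_mul_two_pi, Real.sin_neg]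
    rw [this] at hs
    have h0 : Real.sin (2*a) + Real.sin (2*b) - Real.sin (2*a+2*b) = 0 := by linarith
    rw [trig1] at h0
    have := sin_ne n hn x hx
    have := sin_ne n hn y hy
    rw [← ha] at *
    rcases mul_eq_zero.mp h0 with h | h
    · rcases mul_eq_zero.mp h with h | h
      · rcases mul_eq_zero.mp h with h | h
        · norm_num at h
        · exact sin_ne n hn x hx h
      · exact sin_ne n hn y hy h
    · exact hab h
  · -- k odd
    have : Real.sin ((k:ℝ)*π - (2*a+2*b)) = Real.sin (2*a+2*b) := by
      have : (k:ℝ)*π - (2*a+2*b) = (π - (2*a+2*b)) + (m:ℝ)*(2*π) := by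
        have : (k:ℝ) = 2*(m:ℝ)+1 := by exact_mod_cast hm
        rw [this]; ring
      rw [this, Real.sin_add_int_mul_two_pi, Real.sin_pi_sub]
    rw [this] at hs
    rw [trig2] at hs
    rcases mul_eq_zero.mp hs with h | h
    · rcases mul_eq_zero.mp h with h | h
      · rcases mul_eq_zero.mp h with h | h
        · norm_num at h
        · exact hab h
      · exact cos_ne n hn x hx h
    · exact cos_ne n hn y hy h


def eI (n j : ℕ) : ℤ := if 2*j ≤ n then (j:ℤ) else -(j:ℤ)

lemma eI_natAbs (n j : ℕ) : (eI n j).natAbs = j := by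
  unfold eI; split <;> simp

lemma sin_eI (n j : ℕ) (hn : 2 ≤ n) (h1 : 1 ≤ j) (h2 : 2*j < n) :
    Real.sin ((eI n (n-j) : ℝ) * π / n) = - Real.sin ((j:ℝ) * π / n) := by
  have hn0 : (n:ℝ) ≠ 0 := by positivity
  have he : eI n (n-j) = -((n:ℤ) - j) := by
    unfold eI
    rw [if_neg (by omega)]
    have : ((n-j : ℕ):ℤ) = (n:ℤ) - j := by omega
    rw [this]
  rw [he]
  push_cast
  have : -((n:ℝ) - j) * π / n = -(π - (j:ℝ)*π/n) := by field_simp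
  rw [this, Real.sin_neg, Real.sin_pi_sub]

lemma nu_eq (n : ℕ) (hn : 2 ≤ n) (Θ θ : ℕ → ℕ) :
    nuF n Θ θ = ∑ j ∈ Finset.Icc 1 (n-1),
      ((θ j : ℝ) - Θ j) * (2 * Real.sin ((eI n j : ℝ) * π / n)) := by
  rw [split_sum n hn]
  unfold nuF
  congr 1
  · apply Finset.sum_congr rfl
    intro j hj
    simp only [Finset.mem_filter, Finset.mem_Ico] at hj
    obtain ⟨⟨h1, _⟩, h2⟩ := hj
    have hej : eI n j = (j:ℤ) := by unfold eI; rw [if_pos (by omega)]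
    rw [hej, sin_eI n j hn h1 h2]
    unfold omg
    push_cast
    ring
  · by_cases h2 : 2 ∣ n
    · rw [if_pos h2, if_pos h2]
      have hej : eI n (n/2) = ((n/2 : ℕ):ℤ) := by unfold eI; rw [if_pos (by omega)]
      rw [hej]
      unfold omg
      have hc : ((((n/2:ℕ):ℤ)):ℝ) = ((n/2:ℕ):ℝ) := by exact_mod_cast rfl
      rw [hc]
      ring
    · rw [if_neg h2, if_neg h2]

lemma mu_eq (n : ℕ) (hn : 2 ≤ n) (Θ θ : ℕ → ℕ) :
    muF n Θ θ = (∑ j ∈ Finset.Icc 1 (n-1), eI n j * ((Θ j : ℤ) - θ j))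
      + (n:ℤ) * (∑ j ∈ (Finset.Ico 1 n).filter (fun j => 2*j < n),
          ((Θ (n-j) : ℤ) - θ (n-j))) := by
  rw [split_sum n hn (fun j => eI n j * ((Θ j : ℤ) - θ j))]
  unfold muF
  rw [Finset.mul_sum, add_right_comm, ← Finset.sum_add_distrib]
  congr 1
  · apply Finset.sum_congr rfl
    intro j hj
    simp only [Finset.mem_filter, Finset.mem_Ico] at hj
    obtain ⟨⟨h1, _⟩, h2⟩ := hj
    have hej : eI n j = (j:ℤ) := by unfold eI; rw [if_pos (by omega)]
    have hej2 : eI n (n-j) = -((n:ℤ) - j) := by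
      unfold eI
      rw [if_neg (by omega)]
      have : ((n-j : ℕ):ℤ) = (n:ℤ) - j := by omega
      rw [this]
    rw [hej, hej2]
    ring
  · by_cases h2 : 2 ∣ n
    · rw [if_pos h2, if_pos h2]
      have hej : eI n (n/2) = ((n/2 : ℕ):ℤ) := by unfold eI; rw [if_pos (by omega)]
      rw [hej]
    · rw [if_neg h2, if_neg h2]

lemma bridge (n : ℕ) (hn : 2 ≤ n) (Θ θ : ℕ → ℕ)
    (hcard : (∑ j ∈ Finset.Icc 1 (n - 1), Θ j) + (∑ j ∈ Finset.Icc 1 (n - 1), θ j) = 3)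
    (hnu : ∑ j ∈ Finset.Icc 1 (n-1),
      ((θ j : ℝ) - Θ j) * (2 * Real.sin ((eI n j : ℝ) * π / n)) = 0)
    (hmu : (n:ℤ) ∣ ∑ j ∈ Finset.Icc 1 (n-1), eI n j * ((Θ j : ℤ) - θ j)) : False := by
  classical
  set S := Finset.Icc 1 (n-1) with hS
  set m : Multiset ℤ := S.val.bind
    (fun j => Multiset.replicate (θ j) (eI n j) + Multiset.replicate (Θ j) (-(eI n j))) with hm
  have hcard3 : Multiset.card m = 3 := by
    rw [hm, Multiset.card_bind]
    have : (Multiset.map (Multiset.card ∘ fun j =>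
        Multiset.replicate (θ j) (eI n j) + Multiset.replicate (Θ j) (-(eI n j))) S.val).sum
        = ∑ j ∈ S, (θ j + Θ j) := by
      rw [Finset.sum]
      congr 1
      apply Multiset.map_congr rfl
      intro j _
      simp
    rw [this, Finset.sum_add_distrib]
    omega
  have hsum : m.sum = ∑ j ∈ S, ((θ j : ℤ) - Θ j) * eI n j := by
    rw [hm, Multiset.sum_bind, Finset.sum]
    congr 1
    apply Multiset.map_congr rfl
    intro j _
    simp [Multiset.sum_replicate]
    ring
  have hmap : (m.map (fun k : ℤ => Real.sin ((k:ℝ) * π / n))).sum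
      = ∑ j ∈ S, ((θ j : ℝ) - Θ j) * Real.sin ((eI n j : ℝ) * π / n) := by
    rw [hm, Multiset.map_bind, Multiset.sum_bind, Finset.sum]
    congr 1
    apply Multiset.map_congr rfl
    intro j _
    rw [Multiset.map_add, Multiset.map_replicate, Multiset.map_replicate, Multiset.sum_add,
      Multiset.sum_replicate, Multiset.sum_replicate]
    have : Real.sin (((-(eI n j) : ℤ):ℝ) * π / n) = - Real.sin (((eI n j : ℤ):ℝ) * π / n) := by
      push_cast
      rw [show -(eI n j : ℝ) * π / n = -(((eI n j : ℤ):ℝ) * π / n) by push_cast; ring,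
        Real.sin_neg]
    rw [this]
    simp [nsmul_eq_mul]
    ring
  have hmem : ∀ k ∈ m, ¬ (n:ℤ) ∣ k := by
    intro k hk hdvd
    rw [hm, Multiset.mem_bind] at hk
    obtain ⟨j, hj, hkj⟩ := hk
    have hjS : j ∈ S := hj
    rw [hS, Finset.mem_Icc] at hjS
    have hkabs : k.natAbs = j := by
      rw [Multiset.mem_add] at hkj
      rcases hkj with h | h <;> rw [Multiset.eq_of_mem_replicate h] <;>
        simp [eI_natAbs]
    have : (n:ℤ).natAbs ∣ k.natAbs := Int.natAbs_dvd_natAbs.mpr hdvd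
    rw [hkabs, Int.natAbs_natCast] at this
    have : n ≤ j := Nat.le_of_dvd (by omega) this
    omega
  obtain ⟨x, y, z, hxyz⟩ := Multiset.card_eq_three.mp hcard3
  have hx : ¬ (n:ℤ) ∣ x := hmem x (by rw [hxyz]; simp)
  have hy : ¬ (n:ℤ) ∣ y := hmem y (by rw [hxyz]; simp)
  have hz : ¬ (n:ℤ) ∣ z := hmem z (by rw [hxyz]; simp)
  have hd : (n:ℤ) ∣ x + y + z := by
    have : m.sum = x + y + z := by rw [hxyz]; simp; ring
    rw [← this, hsum]
    have : ∑ j ∈ S, ((θ j : ℤ) - Θ j) * eI n j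
        = - ∑ j ∈ S, eI n j * ((Θ j : ℤ) - θ j) := by
      rw [← Finset.sum_neg_distrib]
      apply Finset.sum_congr rfl
      intro j _
      ring
    rw [this]
    exact dvd_neg.mpr hmu
  have hsin : Real.sin ((x:ℝ)*π/(n:ℝ)) + Real.sin ((y:ℝ)*π/(n:ℝ)) + Real.sin ((z:ℝ)*π/(n:ℝ)) = 0 := by
    have h1 : (m.map (fun k : ℤ => Real.sin ((k:ℝ) * π / n))).sum
        = Real.sin ((x:ℝ)*π/(n:ℝ)) + Real.sin ((y:ℝ)*π/(n:ℝ)) + Real.sin ((z:ℝ)*π/(n:ℝ)) := by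
      rw [hxyz]; simp; ring
    rw [← h1, hmap]
    have h2 : ∑ j ∈ S, ((θ j : ℝ) - Θ j) * Real.sin ((eI n j : ℝ) * π / n)
        = (∑ j ∈ S, ((θ j : ℝ) - Θ j) * (2 * Real.sin ((eI n j : ℝ) * π / n))) / 2 := by
      rw [Finset.sum_div]
      apply Finset.sum_congr rfl
      intro j _
      ring
    rw [h2, hnu]
    norm_num
  exact core n hn x y z hx hy hz hd hsin

theorem no_third_order_symmetric_resonance (n : ℕ) (hn : 2 ≤ n) :
    ¬ ∃ Θ θ : ℕ → ℕ,
        ((∑ j ∈ Finset.Icc 1 (n - 1), Θ j) + (∑ j ∈ Finset.Icc 1 (n - 1), θ j) = 3 ∧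
          nuF n Θ θ = 0 ∧ (n : ℤ) ∣ muF n Θ θ) := by
  rintro ⟨Θ, θ, hcard, hnu, hmu⟩
  rw [nu_eq n hn Θ θ] at hnu
  rw [mu_eq n hn Θ θ] at hmu
  have hmu' : (n:ℤ) ∣ ∑ j ∈ Finset.Icc 1 (n-1), eI n j * ((Θ j : ℤ) - θ j) :=
    (dvd_add_right (Dvd.intro _ rfl)).mp (by rwa [add_comm] at hmu)
  exact bridge n hn Θ θ hcard hnu hmu'
end

section
/- For all 1 ≤ j < n/2 the Poisson brackets satisfy {b_j, c_j} = 2 d_j, {b_j, d_j} = −2 c_j, and {c_j, d_j} = 2 b_j; all other Poisson brackets between members of the collection {a_j, b_j, c_j, d_j : 1 ≤ j < n/2} ∪ {a_{n/2} (n even)} vanish, i.e. {a_j, x} = 0 and {a_{n/2}, x} = 0 for every member x of the collection, and {x_j, y_k} = 0 whenever x_j ∈ {b_j, c_j, d_j}, y_k ∈ {b_k, c_k, d_k} and j ≠ k, as well as {b_j, b_j} = {c_j, c_j} = {d_j, d_j} = 0. -/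
/-!
We work with polynomials on ℝ^{2n-2}, encoded as multivariate polynomials in the
variables `q_j, p_j` (`1 ≤ j ≤ n-1`).  The variable type is `ℕ ⊕ ℕ`, with
`Sum.inl j` standing for `q_j` and `Sum.inr j` for `p_j`; a polynomial on
ℝ^{2n-2} is one supported on the variables with index `1 ≤ j ≤ n-1`.
-/

/-- Variable type: `Sum.inl j ↔ q_j`, `Sum.inr j ↔ p_j`. -/
abbrev Var : Type := ℕ ⊕ ℕ

/-- The variables of ℝ^{2n-2}: `q_j, p_j` for `1 ≤ j ≤ n-1`. -/
def fpuVars (n : ℕ) : Set Var :=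
  {v | ∃ j, 1 ≤ j ∧ j ≤ n - 1 ∧ (v = Sum.inl j ∨ v = Sum.inr j)}

/-- The coordinate polynomial `q_j`. -/
noncomputable def qP (j : ℕ) : MvPolynomial Var ℝ := MvPolynomial.X (Sum.inl j)

/-- The coordinate polynomial `p_j`. -/
noncomputable def pP (j : ℕ) : MvPolynomial Var ℝ := MvPolynomial.X (Sum.inr j)

/-- The Poisson bracket
`{f, g} = Σ_{j=1}^{n-1} (∂f/∂q_j ∂g/∂p_j − ∂f/∂p_j ∂g/∂q_j)`. -/
noncomputable def pb (n : ℕ) (f g : MvPolynomial Var ℝ) : MvPolynomial Var ℝ :=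
  ∑ j ∈ Finset.Icc 1 (n - 1),
    (MvPolynomial.pderiv (Sum.inl j) f * MvPolynomial.pderiv (Sum.inr j) g
      - MvPolynomial.pderiv (Sum.inr j) f * MvPolynomial.pderiv (Sum.inl j) g)

/-- The quadratic part `H₂ = Σ_{j=1}^{n-1} (p_j² + ω_j² q_j²)/2`. -/
noncomputable def H2 (n : ℕ) : MvPolynomial Var ℝ :=
  ∑ j ∈ Finset.Icc 1 (n - 1),
    MvPolynomial.C (1 / 2 : ℝ) * (pP j ^ 2 + MvPolynomial.C (omg n j ^ 2) * qP j ^ 2)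

/-- `a_j = (p_j² + p_{n-j}² + ω_j² q_j² + ω_j² q_{n-j}²)/(2ω_j)`, for `1 ≤ j < n/2`. -/
noncomputable def aP (n j : ℕ) : MvPolynomial Var ℝ :=
  MvPolynomial.C (1 / (2 * omg n j)) *
    (pP j ^ 2 + pP (n - j) ^ 2
      + MvPolynomial.C (omg n j ^ 2) * qP j ^ 2
      + MvPolynomial.C (omg n j ^ 2) * qP (n - j) ^ 2)

/-- `b_j = p_j q_{n-j} − p_{n-j} q_j`, for `1 ≤ j < n/2`. -/
noncomputable def bP (n j : ℕ) : MvPolynomial Var ℝ :=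
  pP j * qP (n - j) - pP (n - j) * qP j

/-- `c_j = (p_{n-j}² − p_j² + ω_j² q_{n-j}² − ω_j² q_j²)/(2ω_j)`, for `1 ≤ j < n/2`. -/
noncomputable def cP (n j : ℕ) : MvPolynomial Var ℝ :=
  MvPolynomial.C (1 / (2 * omg n j)) *
    (pP (n - j) ^ 2 - pP j ^ 2
      + MvPolynomial.C (omg n j ^ 2) * qP (n - j) ^ 2
      - MvPolynomial.C (omg n j ^ 2) * qP j ^ 2)

/-- `d_j = (p_j p_{n-j} + ω_j² q_j q_{n-j})/ω_j`, for `1 ≤ j < n/2`. -/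
noncomputable def dP (n j : ℕ) : MvPolynomial Var ℝ :=
  MvPolynomial.C (1 / omg n j) *
    (pP j * pP (n - j) + MvPolynomial.C (omg n j ^ 2) * qP j * qP (n - j))

/-- For even `n`, `a_{n/2} = (p_{n/2}² + ω_{n/2}² q_{n/2}²)/(2ω_{n/2})`. -/
noncomputable def aHalf (n : ℕ) : MvPolynomial Var ℝ :=
  MvPolynomial.C (1 / (2 * omg n (n / 2))) *
    (pP (n / 2) ^ 2 + MvPolynomial.C (omg n (n / 2) ^ 2) * qP (n / 2) ^ 2)

/-- The linear substitution realizing the rotation symmetry `T`: for `1 ≤ j < n/2`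
it rotates the planes `(q_j, q_{n-j})` and `(p_j, p_{n-j})` by the angle `2πj/n`,
and for even `n` it flips the signs of `q_{n/2}` and `p_{n/2}`.
`Tsub v` is the polynomial expressing the `v`-th coordinate of `T x`. -/
noncomputable def Tsub (n : ℕ) : Var → MvPolynomial Var ℝ := fun v =>
  match v with
  | Sum.inl m =>
      if 1 ≤ m ∧ 2 * m < n then
        MvPolynomial.C (Real.cos (2 * Real.pi * m / n)) * qP m
          + MvPolynomial.C (Real.sin (2 * Real.pi * m / n)) * qP (n - m)
      else if 2 * m = n then - qP m
      else if n < 2 * m ∧ m ≤ n - 1 then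
        MvPolynomial.C (-(Real.sin (2 * Real.pi * (n - m) / n))) * qP (n - m)
          + MvPolynomial.C (Real.cos (2 * Real.pi * (n - m) / n)) * qP m
      else qP m
  | Sum.inr m =>
      if 1 ≤ m ∧ 2 * m < n then
        MvPolynomial.C (Real.cos (2 * Real.pi * m / n)) * pP m
          + MvPolynomial.C (Real.sin (2 * Real.pi * m / n)) * pP (n - m)
      else if 2 * m = n then - pP m
      else if n < 2 * m ∧ m ≤ n - 1 then
        MvPolynomial.C (-(Real.sin (2 * Real.pi * (n - m) / n))) * pP (n - m)
          + MvPolynomial.C (Real.cos (2 * Real.pi * (n - m) / n)) * pP m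
      else pP m

/-- The linear substitution realizing the reflection symmetry `S`:
`q_j ↦ −q_j`, `p_j ↦ −p_j` for `1 ≤ j ≤ n/2`, the other coordinates are fixed.
`Ssub v` is the polynomial expressing the `v`-th coordinate of `S x`. -/
noncomputable def Ssub (n : ℕ) : Var → MvPolynomial Var ℝ := fun v =>
  match v with
  | Sum.inl m => if 1 ≤ m ∧ 2 * m ≤ n then - qP m else qP m
  | Sum.inr m => if 1 ≤ m ∧ 2 * m ≤ n then - pP m else pP m

/-!
STATEMENT 5: The commutation relations `{b_j, c_j} = 2 d_j`, `{b_j, d_j} = −2 c_j`,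
`{c_j, d_j} = 2 b_j` for `1 ≤ j < n/2`; all other Poisson brackets between members of
the collection `{a_j, b_j, c_j, d_j (1 ≤ j < n/2)} ∪ {a_{n/2} (n even)}` vanish.
-/

section Aux
open MvPolynomial

lemma omg_pos {n j : ℕ} (h1 : 1 ≤ j) (h2 : j < n) : 0 < omg n j := by
  have hn0 : (0:ℝ) < n := by exact_mod_cast Nat.pos_of_ne_zero (by omega)
  have hj0 : (0:ℝ) < j := by exact_mod_cast h1
  have hjn : (j:ℝ) < n := by exact_mod_cast h2
  have hpi := Real.pi_pos
  refine mul_pos two_pos (Real.sin_pos_of_pos_of_lt_pi (by positivity) ?_)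
  rw [div_lt_iff₀ hn0]
  nlinarith

/-- `f` depends only on the variables with index `j` or `n - j`. -/
def supp2 (n j : ℕ) (f : MvPolynomial Var ℝ) : Prop :=
  ∀ m : ℕ, m ≠ j → m ≠ n - j →
    MvPolynomial.pderiv (Sum.inl m) f = 0 ∧ MvPolynomial.pderiv (Sum.inr m) f = 0

lemma supp_bP (n j : ℕ) : supp2 n j (bP n j) := by
  intro m h1 h2
  constructor <;>
    simp [bP, qP, pP, pderiv_mul, map_sub, Ne.symm h1, Ne.symm h2]

lemma supp_aP (n j : ℕ) : supp2 n j (aP n j) := by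
  intro m h1 h2
  constructor <;>
    simp [aP, qP, pP, pderiv_C_mul, pderiv_pow, map_add, map_sub,
      Ne.symm h1, Ne.symm h2]

lemma supp_cP (n j : ℕ) : supp2 n j (cP n j) := by
  intro m h1 h2
  constructor <;>
    simp [cP, qP, pP, pderiv_C_mul, pderiv_pow, map_add, map_sub,
      Ne.symm h1, Ne.symm h2]

lemma supp_dP (n j : ℕ) : supp2 n j (dP n j) := by
  intro m h1 h2
  constructor <;>
    simp [dP, qP, pP, pderiv_C_mul, pderiv_mul, pderiv_pow, map_add, map_sub,
      Ne.symm h1, Ne.symm h2]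

lemma supp_aHalf (n : ℕ) : supp2 n (n / 2) (aHalf n) := by
  intro m h1 _
  constructor <;>
    simp [aHalf, qP, pP, pderiv_C_mul, pderiv_pow, map_add, Ne.symm h1]

lemma pb_cross {n j k : ℕ} {f g : MvPolynomial Var ℝ}
    (hf : supp2 n j f) (hg : supp2 n k g)
    (e1 : j ≠ k) (e2 : j ≠ n - k) (e3 : n - j ≠ k) (e4 : n - j ≠ n - k) :
    pb n f g = 0 := by
  unfold pb
  apply Finset.sum_eq_zero
  intro m _
  by_cases hmj : m = j
  · obtain ⟨h5, h6⟩ := hg j e1 e2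
    rw [hmj, h5, h6]; ring
  by_cases hmnj : m = n - j
  · obtain ⟨h5, h6⟩ := hg _ e3 e4
    rw [hmnj, h5, h6]; ring
  · obtain ⟨h5, h6⟩ := hf m hmj hmnj
    rw [h5, h6]; ring

lemma pb_self (n : ℕ) (f : MvPolynomial Var ℝ) : pb n f f = 0 := by
  unfold pb
  apply Finset.sum_eq_zero
  intro m _
  ring

lemma pb_two {n j : ℕ} (hn : 2 ≤ n) (h1 : 1 ≤ j) (h2 : 2 * j < n)
    {f : MvPolynomial Var ℝ} (g : MvPolynomial Var ℝ) (hf : supp2 n j f) :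
    pb n f g =
      (MvPolynomial.pderiv (Sum.inl j) f * MvPolynomial.pderiv (Sum.inr j) g
        - MvPolynomial.pderiv (Sum.inr j) f * MvPolynomial.pderiv (Sum.inl j) g)
      + (MvPolynomial.pderiv (Sum.inl (n-j)) f * MvPolynomial.pderiv (Sum.inr (n-j)) g
        - MvPolynomial.pderiv (Sum.inr (n-j)) f * MvPolynomial.pderiv (Sum.inl (n-j)) g) := by
  have hsub : ({j, n - j} : Finset ℕ) ⊆ Finset.Icc 1 (n - 1) := by
    intro m hm
    simp only [Finset.mem_insert, Finset.mem_singleton] at hm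
    simp only [Finset.mem_Icc]
    omega
  rw [pb, ← Finset.sum_subset hsub]
  · rw [Finset.sum_insert (by simp; omega), Finset.sum_singleton]
  · intro m _ hms
    simp only [Finset.mem_insert, Finset.mem_singleton, not_or] at hms
    obtain ⟨h5, h6⟩ := hf m hms.1 hms.2
    rw [h5, h6]; ring

end Aux

section Comp
open MvPolynomial

lemma pb_bc {n j : ℕ} (hn : 2 ≤ n) (h1 : 1 ≤ j) (h2 : 2 * j < n) :
    pb n (bP n j) (cP n j) = 2 * dP n j := by
  have hω : omg n j ≠ 0 := ne_of_gt (omg_pos h1 (by omega))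
  have hne : j ≠ n - j := by omega
  have hne' : n - j ≠ j := by omega
  rw [pb_two hn h1 h2 _ (supp_bP n j)]
  simp only [aP, bP, cP, dP, qP, pP, map_add, map_sub, pderiv_mul, pderiv_pow,
    pderiv_C_mul, pderiv_C, pderiv_X, Pi.single_apply, Sum.inl.injEq, Sum.inr.injEq,
    reduceCtorEq, hne, hne', if_true, if_false, ite_true, ite_false,
    mul_zero, zero_mul, mul_one, one_mul, add_zero, zero_add, sub_zero, zero_sub]
  apply MvPolynomial.funext
  intro x
  simp
  field_simp
  ring

lemma pb_bd {n j : ℕ} (hn : 2 ≤ n) (h1 : 1 ≤ j) (h2 : 2 * j < n) :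
    pb n (bP n j) (dP n j) = -(2 * cP n j) := by
  have hω : omg n j ≠ 0 := ne_of_gt (omg_pos h1 (by omega))
  have hne : j ≠ n - j := by omega
  have hne' : n - j ≠ j := by omega
  rw [pb_two hn h1 h2 _ (supp_bP n j)]
  simp only [aP, bP, cP, dP, qP, pP, map_add, map_sub, pderiv_mul, pderiv_pow,
    pderiv_C_mul, pderiv_C, pderiv_X, Pi.single_apply, Sum.inl.injEq, Sum.inr.injEq,
    reduceCtorEq, hne, hne', if_true, if_false, ite_true, ite_false,
    mul_zero, zero_mul, mul_one, one_mul, add_zero, zero_add, sub_zero, zero_sub]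
  apply MvPolynomial.funext
  intro x
  simp
  field_simp
  ring

lemma pb_cd {n j : ℕ} (hn : 2 ≤ n) (h1 : 1 ≤ j) (h2 : 2 * j < n) :
    pb n (cP n j) (dP n j) = 2 * bP n j := by
  have hω : omg n j ≠ 0 := ne_of_gt (omg_pos h1 (by omega))
  have hne : j ≠ n - j := by omega
  have hne' : n - j ≠ j := by omega
  rw [pb_two hn h1 h2 _ (supp_cP n j)]
  simp only [aP, bP, cP, dP, qP, pP, map_add, map_sub, pderiv_mul, pderiv_pow,
    pderiv_C_mul, pderiv_C, pderiv_X, Pi.single_apply, Sum.inl.injEq, Sum.inr.injEq,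
    reduceCtorEq, hne, hne', if_true, if_false, ite_true, ite_false,
    mul_zero, zero_mul, mul_one, one_mul, add_zero, zero_add, sub_zero, zero_sub]
  apply MvPolynomial.funext
  intro x
  simp
  field_simp
  ring

lemma pb_ab {n j : ℕ} (hn : 2 ≤ n) (h1 : 1 ≤ j) (h2 : 2 * j < n) :
    pb n (aP n j) (bP n j) = 0 := by
  have hω : omg n j ≠ 0 := ne_of_gt (omg_pos h1 (by omega))
  have hne : j ≠ n - j := by omega
  have hne' : n - j ≠ j := by omega
  rw [pb_two hn h1 h2 _ (supp_aP n j)]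
  simp only [aP, bP, cP, dP, qP, pP, map_add, map_sub, pderiv_mul, pderiv_pow,
    pderiv_C_mul, pderiv_C, pderiv_X, Pi.single_apply, Sum.inl.injEq, Sum.inr.injEq,
    reduceCtorEq, hne, hne', if_true, if_false, ite_true, ite_false,
    mul_zero, zero_mul, mul_one, one_mul, add_zero, zero_add, sub_zero, zero_sub]
  apply MvPolynomial.funext
  intro x
  simp
  field_simp
  ring

lemma pb_ac {n j : ℕ} (hn : 2 ≤ n) (h1 : 1 ≤ j) (h2 : 2 * j < n) :
    pb n (aP n j) (cP n j) = 0 := by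
  have hω : omg n j ≠ 0 := ne_of_gt (omg_pos h1 (by omega))
  have hne : j ≠ n - j := by omega
  have hne' : n - j ≠ j := by omega
  rw [pb_two hn h1 h2 _ (supp_aP n j)]
  simp only [aP, bP, cP, dP, qP, pP, map_add, map_sub, pderiv_mul, pderiv_pow,
    pderiv_C_mul, pderiv_C, pderiv_X, Pi.single_apply, Sum.inl.injEq, Sum.inr.injEq,
    reduceCtorEq, hne, hne', if_true, if_false, ite_true, ite_false,
    mul_zero, zero_mul, mul_one, one_mul, add_zero, zero_add, sub_zero, zero_sub]
  apply MvPolynomial.funext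
  intro x
  simp
  field_simp
  ring

lemma pb_ad {n j : ℕ} (hn : 2 ≤ n) (h1 : 1 ≤ j) (h2 : 2 * j < n) :
    pb n (aP n j) (dP n j) = 0 := by
  have hω : omg n j ≠ 0 := ne_of_gt (omg_pos h1 (by omega))
  have hne : j ≠ n - j := by omega
  have hne' : n - j ≠ j := by omega
  rw [pb_two hn h1 h2 _ (supp_aP n j)]
  simp only [aP, bP, cP, dP, qP, pP, map_add, map_sub, pderiv_mul, pderiv_pow,
    pderiv_C_mul, pderiv_C, pderiv_X, Pi.single_apply, Sum.inl.injEq, Sum.inr.injEq,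
    reduceCtorEq, hne, hne', if_true, if_false, ite_true, ite_false,
    mul_zero, zero_mul, mul_one, one_mul, add_zero, zero_add, sub_zero, zero_sub]
  apply MvPolynomial.funext
  intro x
  simp
  field_simp
  ring
end Comp

theorem commutation_relations (n : ℕ) (hn : 2 ≤ n) :
    (∀ j, 1 ≤ j → 2 * j < n →
        pb n (bP n j) (cP n j) = 2 * dP n j ∧
        pb n (bP n j) (dP n j) = -(2 * cP n j) ∧
        pb n (cP n j) (dP n j) = 2 * bP n j) ∧
    -- `{a_j, x} = 0` for every member `x` of the collection
    (∀ j k, 1 ≤ j → 2 * j < n → 1 ≤ k → 2 * k < n →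
        pb n (aP n j) (aP n k) = 0 ∧ pb n (aP n j) (bP n k) = 0 ∧
        pb n (aP n j) (cP n k) = 0 ∧ pb n (aP n j) (dP n k) = 0) ∧
    -- `{a_{n/2}, x} = 0` for every member `x` of the collection (n even)
    (2 ∣ n → ∀ j, 1 ≤ j → 2 * j < n →
        pb n (aHalf n) (aP n j) = 0 ∧ pb n (aHalf n) (bP n j) = 0 ∧
        pb n (aHalf n) (cP n j) = 0 ∧ pb n (aHalf n) (dP n j) = 0 ∧
        pb n (aP n j) (aHalf n) = 0 ∧ pb n (bP n j) (aHalf n) = 0 ∧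
        pb n (cP n j) (aHalf n) = 0 ∧ pb n (dP n j) (aHalf n) = 0) ∧
    (2 ∣ n → pb n (aHalf n) (aHalf n) = 0) ∧
    -- brackets between members with different indices `j ≠ k` vanish
    (∀ j k, 1 ≤ j → 2 * j < n → 1 ≤ k → 2 * k < n → j ≠ k →
        pb n (bP n j) (bP n k) = 0 ∧ pb n (bP n j) (cP n k) = 0 ∧
        pb n (bP n j) (dP n k) = 0 ∧ pb n (cP n j) (cP n k) = 0 ∧
        pb n (cP n j) (dP n k) = 0 ∧ pb n (dP n j) (dP n k) = 0) ∧
    -- `{b_j, b_j} = {c_j, c_j} = {d_j, d_j} = 0`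
    (∀ j, 1 ≤ j → 2 * j < n →
        pb n (bP n j) (bP n j) = 0 ∧ pb n (cP n j) (cP n j) = 0 ∧
        pb n (dP n j) (dP n j) = 0) := by
  refine ⟨?_, ?_, ?_, ?_, ?_, ?_⟩
  · intro j h1 h2
    exact ⟨pb_bc hn h1 h2, pb_bd hn h1 h2, pb_cd hn h1 h2⟩
  · intro j k hj1 hj2 hk1 hk2
    by_cases hjk : j = k
    · subst hjk
      exact ⟨pb_self n _, pb_ab hn hj1 hj2, pb_ac hn hj1 hj2, pb_ad hn hj1 hj2⟩
    · exact ⟨pb_cross (supp_aP n j) (supp_aP n k) (by omega) (by omega) (by omega) (by omega),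
        pb_cross (supp_aP n j) (supp_bP n k) (by omega) (by omega) (by omega) (by omega),
        pb_cross (supp_aP n j) (supp_cP n k) (by omega) (by omega) (by omega) (by omega),
        pb_cross (supp_aP n j) (supp_dP n k) (by omega) (by omega) (by omega) (by omega)⟩
  · intro hdvd j h1 h2
    exact ⟨pb_cross (supp_aHalf n) (supp_aP n j) (by omega) (by omega) (by omega) (by omega),
      pb_cross (supp_aHalf n) (supp_bP n j) (by omega) (by omega) (by omega) (by omega),
      pb_cross (supp_aHalf n) (supp_cP n j) (by omega) (by omega) (by omega) (by omega),
      pb_cross (supp_aHalf n) (supp_dP n j) (by omega) (by omega) (by omega) (by omega),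
      pb_cross (supp_aP n j) (supp_aHalf n) (by omega) (by omega) (by omega) (by omega),
      pb_cross (supp_bP n j) (supp_aHalf n) (by omega) (by omega) (by omega) (by omega),
      pb_cross (supp_cP n j) (supp_aHalf n) (by omega) (by omega) (by omega) (by omega),
      pb_cross (supp_dP n j) (supp_aHalf n) (by omega) (by omega) (by omega) (by omega)⟩
  · intro _
    exact pb_self n _
  · intro j k hj1 hj2 hk1 hk2 hjk
    exact ⟨pb_cross (supp_bP n j) (supp_bP n k) (by omega) (by omega) (by omega) (by omega),
      pb_cross (supp_bP n j) (supp_cP n k) (by omega) (by omega) (by omega) (by omega),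
      pb_cross (supp_bP n j) (supp_dP n k) (by omega) (by omega) (by omega) (by omega),
      pb_cross (supp_cP n j) (supp_cP n k) (by omega) (by omega) (by omega) (by omega),
      pb_cross (supp_cP n j) (supp_dP n k) (by omega) (by omega) (by omega) (by omega),
      pb_cross (supp_dP n j) (supp_dP n k) (by omega) (by omega) (by omega) (by omega)⟩
  · intro j h1 h2
    exact ⟨pb_self n _, pb_self n _, pb_self n _⟩
end

section
/- Let n ≥ 3 be odd and m := (n−1)/2, and let F : ℝ^{2n-2} → ℝ^{n-1} be the map F = (a_1, …, a_m, b_1, …, b_m). If (a, b) ∈ ℝ^m × ℝ^m satisfies a_j > 0 and |b_j| < a_j for all 1 ≤ j ≤ m, then the fiber F⁻¹({(a, b)}), as a subspace of ℝ^{2n-2}, is homeomorphic to the (n−1)-dimensional torus (ℝ/2πℤ)^{n-1}. -/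
/-!
We work on ℝ^{2n-2}, realized as `(Fin (n-1) → ℝ) × (Fin (n-1) → ℝ)`:
the first factor carries the coordinates `q_1, …, q_{n-1}` and the second the
coordinates `p_1, …, p_{n-1}` (index `i : Fin (n-1)` corresponds to `j = i + 1`).
-/

/-- Coordinate extension: `coord n x j` is the `j`-th coordinate (`1 ≤ j ≤ n-1`)
of `x : Fin (n-1) → ℝ`. -/
def coord (n : ℕ) (x : Fin (n - 1) → ℝ) (j : ℕ) : ℝ :=
  if h : 1 ≤ j ∧ j ≤ n - 1 then x ⟨j - 1, by omega⟩ else 0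

/-- `a_j = (p_j² + p_{n-j}² + ω_j² q_j² + ω_j² q_{n-j}²)/(2ω_j)`, for `1 ≤ j < n/2`. -/
noncomputable def aF (n j : ℕ) (x : (Fin (n - 1) → ℝ) × (Fin (n - 1) → ℝ)) : ℝ :=
  (coord n x.2 j ^ 2 + coord n x.2 (n - j) ^ 2
    + omg n j ^ 2 * coord n x.1 j ^ 2 + omg n j ^ 2 * coord n x.1 (n - j) ^ 2)
    / (2 * omg n j)

/-- `b_j = p_j q_{n-j} − p_{n-j} q_j`, for `1 ≤ j < n/2`. -/
noncomputable def bF (n j : ℕ) (x : (Fin (n - 1) → ℝ) × (Fin (n - 1) → ℝ)) : ℝ :=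
  coord n x.2 j * coord n x.1 (n - j) - coord n x.2 (n - j) * coord n x.1 j

/-- For odd `n` with `m = (n-1)/2`, the integral map
`F = (a_1, …, a_m, b_1, …, b_m) : ℝ^{2n-2} → ℝ^{n-1}`. -/
noncomputable def Fmap (n : ℕ) (x : (Fin (n - 1) → ℝ) × (Fin (n - 1) → ℝ)) :
    (Fin ((n - 1) / 2) → ℝ) × (Fin ((n - 1) / 2) → ℝ) :=
  (fun i => aF n (i.1 + 1) x, fun i => bF n (i.1 + 1) x)

/-!
STATEMENT 8: For odd `n ≥ 3` and `m = (n−1)/2`, if `(a, b) ∈ ℝ^m × ℝ^m` satisfies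
`a_j > 0` and `|b_j| < a_j` for all `1 ≤ j ≤ m`, the fiber `F⁻¹({(a, b)})` of the
integral map `F = (a_1, …, a_m, b_1, …, b_m)`, as a subspace of ℝ^{2n-2}, is
homeomorphic to the `(n−1)`-dimensional torus `(ℝ/2πℤ)^{n-1}`.
-/

namespace FiberTorusProof

lemma coord_apply (n : ℕ) (x : Fin (n - 1) → ℝ) (j : ℕ) (h1 : 1 ≤ j) (h2 : j ≤ n - 1) :
    coord n x j = x ⟨j - 1, by omega⟩ := dif_pos ⟨h1, h2⟩

lemma angle_inj : ∀ {x y : Real.Angle}, x.cos = y.cos → x.sin = y.sin → x = y := by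
  intro x y
  induction x using Real.Angle.induction_on
  induction y using Real.Angle.induction_on
  intro hc hs
  rw [Real.Angle.cos_coe, Real.Angle.cos_coe] at hc
  rw [Real.Angle.sin_coe, Real.Angle.sin_coe] at hs
  exact Real.Angle.cos_sin_inj hc hs

lemma angle_surj {c s : ℝ} (h : c ^ 2 + s ^ 2 = 1) :
    ∃ θ : Real.Angle, θ.cos = c ∧ θ.sin = s := by
  have hz : (⟨c, s⟩ : ℂ) ≠ 0 := by
    intro hzero
    rw [Complex.ext_iff] at hzero
    simp at hzero
    rw [hzero.1, hzero.2] at h; norm_num at h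
  have habs : ‖(⟨c, s⟩ : ℂ)‖ = 1 := by
    rw [Complex.norm_def, Complex.normSq_mk]
    rw [show c * c + s * s = 1 by nlinarith]
    exact Real.sqrt_one
  refine ⟨((⟨c, s⟩ : ℂ).arg : ℝ), ?_, ?_⟩
  · rw [Real.Angle.cos_coe, Complex.cos_arg hz, habs]; simp
  · rw [Real.Angle.sin_coe, Complex.sin_arg, habs]; simp

lemma alg_a (w ru rv c1 s1 c2 s2 a b : ℝ) (hw : w ≠ 0) (h1 : c1^2+s1^2=1) (h2 : c2^2+s2^2=1)
    (hru : ru^2 = w*(a-b)/2) (hrv : rv^2 = w*(a+b)/2) :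
    ((ru*c1+rv*c2)^2 + (ru*s1-rv*s2)^2
      + w^2*((ru*s1+rv*s2)/w)^2 + w^2*((rv*c2-ru*c1)/w)^2)/(2*w) = a := by
  rw [div_eq_iff (by simpa using hw : (2:ℝ)*w ≠ 0)]
  field_simp
  linear_combination 2*ru^2*h1 + 2*rv^2*h2 + 2*hru + 2*hrv

lemma alg_b (w ru rv c1 s1 c2 s2 a b : ℝ) (hw : w ≠ 0) (h1 : c1^2+s1^2=1) (h2 : c2^2+s2^2=1)
    (hru : ru^2 = w*(a-b)/2) (hrv : rv^2 = w*(a+b)/2) :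
    (ru*c1+rv*c2) * ((rv*c2-ru*c1)/w) - (ru*s1-rv*s2) * ((ru*s1+rv*s2)/w) = b := by
  field_simp
  linear_combination rv^2*h2 - ru^2*h1 + hrv - hru

def pos1 (n : ℕ) (i : Fin ((n - 1) / 2)) : Fin (n - 1) := ⟨i.1, by have := i.2; omega⟩
def pos2 (n : ℕ) (i : Fin ((n - 1) / 2)) : Fin (n - 1) := ⟨n - 2 - i.1, by have := i.2; omega⟩

variable (n : ℕ) (ab : (Fin ((n - 1) / 2) → ℝ) × (Fin ((n - 1) / 2) → ℝ))
  (θ : Fin (n - 1) → AddCircle (2 * Real.pi)) (i : Fin ((n - 1) / 2))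

noncomputable def ru : ℝ := Real.sqrt (omg n (i.1 + 1) * (ab.1 i - ab.2 i) / 2)
noncomputable def rv : ℝ := Real.sqrt (omg n (i.1 + 1) * (ab.1 i + ab.2 i) / 2)

noncomputable def P1 : ℝ :=
  ru n ab i * Real.Angle.cos (θ (pos1 n i)) + rv n ab i * Real.Angle.cos (θ (pos2 n i))
noncomputable def P2 : ℝ :=
  ru n ab i * Real.Angle.sin (θ (pos1 n i)) - rv n ab i * Real.Angle.sin (θ (pos2 n i))
noncomputable def Q1 : ℝ :=
  (ru n ab i * Real.Angle.sin (θ (pos1 n i)) + rv n ab i * Real.Angle.sin (θ (pos2 n i)))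
    / omg n (i.1 + 1)
noncomputable def Q2 : ℝ :=
  (rv n ab i * Real.Angle.cos (θ (pos2 n i)) - ru n ab i * Real.Angle.cos (θ (pos1 n i)))
    / omg n (i.1 + 1)

variable (hn2 : n % 2 = 1)

noncomputable def Phi : (Fin (n - 1) → ℝ) × (Fin (n - 1) → ℝ) :=
  (fun k => if h : k.1 < (n - 1) / 2 then Q1 n ab θ ⟨k.1, h⟩
      else Q2 n ab θ ⟨n - 2 - k.1, by have := k.2; omega⟩,
   fun k => if h : k.1 < (n - 1) / 2 then P1 n ab θ ⟨k.1, h⟩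
      else P2 n ab θ ⟨n - 2 - k.1, by have := k.2; omega⟩)

lemma Phi_fst_pos1 : (Phi n ab θ hn2).1 (pos1 n i) = Q1 n ab θ i := dif_pos i.2
lemma Phi_snd_pos1 : (Phi n ab θ hn2).2 (pos1 n i) = P1 n ab θ i := dif_pos i.2

lemma Phi_fst_pos2 : (Phi n ab θ hn2).1 (pos2 n i) = Q2 n ab θ i := by
  have h2i := i.2
  simp only [Phi, pos2]
  rw [dif_neg (by simp; omega)]
  congr 1
  exact Fin.ext (by simp; omega)

lemma Phi_snd_pos2 : (Phi n ab θ hn2).2 (pos2 n i) = P2 n ab θ i := by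
  have h2i := i.2
  simp only [Phi, pos2]
  rw [dif_neg (by simp; omega)]
  congr 1
  exact Fin.ext (by simp; omega)

lemma coord_pos1 (x : Fin (n - 1) → ℝ) : coord n x (i.1 + 1) = x (pos1 n i) := by
  have h2i := i.2
  rw [coord_apply n x _ (by omega) (by omega)]
  exact congrArg x (Fin.ext (by simp [pos1]))

lemma coord_pos2 (x : Fin (n - 1) → ℝ) : coord n x (n - (i.1 + 1)) = x (pos2 n i) := by
  have h2i := i.2
  rw [coord_apply n x _ (by omega) (by omega)]
  exact congrArg x (Fin.ext (by simp [pos2]; omega))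

lemma omg_pos (hn : 3 ≤ n) : 0 < omg n (i.1 + 1) := by
  have h2i := i.2
  have hπ := Real.pi_pos
  have hn0 : (0 : ℝ) < n := by exact_mod_cast (by omega : 0 < n)
  have hc : (0 : ℝ) < ((i.1 + 1 : ℕ) : ℝ) := by exact_mod_cast Nat.succ_pos i.1
  have hcn : ((i.1 + 1 : ℕ) : ℝ) < (n : ℝ) := by exact_mod_cast (by omega : i.1 + 1 < n)
  unfold omg
  apply mul_pos two_pos
  apply Real.sin_pos_of_pos_of_lt_pi
  · exact div_pos (mul_pos hc hπ) hn0
  · rw [div_lt_iff₀ hn0]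
    nlinarith

end FiberTorusProof

theorem fiber_of_integral_map_is_torus (n : ℕ) (hn : 3 ≤ n) (hodd : Odd n)
    (ab : (Fin ((n - 1) / 2) → ℝ) × (Fin ((n - 1) / 2) → ℝ))
    (hab : ∀ i, 0 < ab.1 i ∧ |ab.2 i| < ab.1 i) :
    Nonempty ((Fmap n ⁻¹' {ab} : Set ((Fin (n - 1) → ℝ) × (Fin (n - 1) → ℝ))) ≃ₜ
      (Fin (n - 1) → AddCircle (2 * Real.pi))) := by
  classical
  open FiberTorusProof in
  obtain ⟨t, ht⟩ := hodd
  have hn2 : n % 2 = 1 := by omega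
  haveI : Fact (0 < 2 * Real.pi) := ⟨by positivity⟩
  have hw : ∀ i : Fin ((n - 1) / 2), 0 < omg n (i.1 + 1) := fun i => omg_pos n i hn
  have hamb : ∀ i : Fin ((n - 1) / 2), 0 < ab.1 i - ab.2 i := by
    intro i; have h := (hab i).2; have := le_abs_self (ab.2 i); linarith
  have hapb : ∀ i : Fin ((n - 1) / 2), 0 < ab.1 i + ab.2 i := by
    intro i; have h := (hab i).2; have := neg_abs_le (ab.2 i); linarith
  have hrupos : ∀ i, 0 < ru n ab i := fun i =>
    Real.sqrt_pos.mpr (by have := hw i; have := hamb i; positivity)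
  have hrvpos : ∀ i, 0 < rv n ab i := fun i =>
    Real.sqrt_pos.mpr (by have := hw i; have := hapb i; positivity)
  have hru2 : ∀ i, (ru n ab i) ^ 2 = omg n (i.1 + 1) * (ab.1 i - ab.2 i) / 2 := fun i =>
    Real.sq_sqrt (by have := hw i; have := hamb i; positivity)
  have hrv2 : ∀ i, (rv n ab i) ^ 2 = omg n (i.1 + 1) * (ab.1 i + ab.2 i) / 2 := fun i =>
    Real.sq_sqrt (by have := hw i; have := hapb i; positivity)
  -- membership
  have hmem : ∀ θ, Fmap n (Phi n ab θ hn2) = ab := by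
    intro θ
    unfold Fmap
    refine Prod.ext ?_ ?_ <;> funext i
    · show aF n (i.1 + 1) (Phi n ab θ hn2) = ab.1 i
      unfold aF
      rw [coord_pos1 n i, coord_pos2 n i, coord_pos1 n i, coord_pos2 n i,
        Phi_fst_pos1, Phi_fst_pos2, Phi_snd_pos1, Phi_snd_pos2]
      simp only [P1, P2, Q1, Q2]
      exact alg_a _ _ _ _ _ _ _ _ _ (hw i).ne'
        (Real.Angle.cos_sq_add_sin_sq _) (Real.Angle.cos_sq_add_sin_sq _) (hru2 i) (hrv2 i)
    · show bF n (i.1 + 1) (Phi n ab θ hn2) = ab.2 i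
      unfold bF
      rw [coord_pos1 n i, coord_pos2 n i, coord_pos1 n i, coord_pos2 n i,
        Phi_fst_pos1, Phi_fst_pos2, Phi_snd_pos1, Phi_snd_pos2]
      simp only [P1, P2, Q1, Q2]
      exact alg_b _ _ _ _ _ _ _ _ _ (hw i).ne'
        (Real.Angle.cos_sq_add_sin_sq _) (Real.Angle.cos_sq_add_sin_sq _) (hru2 i) (hrv2 i)
  -- continuity
  have hccos : ∀ j : Fin (n - 1), Continuous
      (fun θ : Fin (n - 1) → AddCircle (2 * Real.pi) => Real.Angle.cos (θ j)) :=
    fun j => Real.Angle.continuous_cos.comp (continuous_apply j)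
  have hcsin : ∀ j : Fin (n - 1), Continuous
      (fun θ : Fin (n - 1) → AddCircle (2 * Real.pi) => Real.Angle.sin (θ j)) :=
    fun j => Real.Angle.continuous_sin.comp (continuous_apply j)
  have hcont : Continuous (fun θ => Phi n ab θ hn2) := by
    refine Continuous.prodMk ?_ ?_ <;> refine continuous_pi fun k => ?_ <;>
      by_cases h : k.1 < (n - 1) / 2
    · simp only [Phi, dif_pos h]
      exact ((continuous_const.mul (hcsin _)).add (continuous_const.mul (hcsin _))).div_const _
    · simp only [Phi, dif_neg h]
      exact ((continuous_const.mul (hccos _)).sub (continuous_const.mul (hccos _))).div_const _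
    · simp only [Phi, dif_pos h]
      exact (continuous_const.mul (hccos _)).add (continuous_const.mul (hccos _))
    · simp only [Phi, dif_neg h]
      exact (continuous_const.mul (hcsin _)).sub (continuous_const.mul (hcsin _))
  -- injectivity
  have hinj : Function.Injective (fun θ => Phi n ab θ hn2) := by
    intro θ θ' hEq
    simp only at hEq
    have key : ∀ i : Fin ((n - 1) / 2),
        θ (pos1 n i) = θ' (pos1 n i) ∧ θ (pos2 n i) = θ' (pos2 n i) := by
      intro i
      have hwne := (hw i).ne'
      have hwpos' := hw i
      have hrune := (hrupos i).ne'
      have hrvne := (hrvpos i).ne'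
      have e1 : P1 n ab θ i = P1 n ab θ' i := by
        have h := congrFun (congrArg Prod.snd hEq) (pos1 n i)
        rwa [Phi_snd_pos1, Phi_snd_pos1] at h
      have e2 : P2 n ab θ i = P2 n ab θ' i := by
        have h := congrFun (congrArg Prod.snd hEq) (pos2 n i)
        rwa [Phi_snd_pos2, Phi_snd_pos2] at h
      have e3 : Q1 n ab θ i = Q1 n ab θ' i := by
        have h := congrFun (congrArg Prod.fst hEq) (pos1 n i)
        rwa [Phi_fst_pos1, Phi_fst_pos1] at h
      have e4 : Q2 n ab θ i = Q2 n ab θ' i := by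
        have h := congrFun (congrArg Prod.fst hEq) (pos2 n i)
        rwa [Phi_fst_pos2, Phi_fst_pos2] at h
      simp only [P1, P2, Q1, Q2] at e1 e2 e3 e4
      rw [div_eq_div_iff hwne hwne] at e3 e4
      have e3' := mul_right_cancel₀ hwne e3
      have e4' := mul_right_cancel₀ hwne e4
      have hC1 : Real.Angle.cos (θ (pos1 n i)) = Real.Angle.cos (θ' (pos1 n i)) :=
        mul_left_cancel₀ hrune (by linarith)
      have hC2 : Real.Angle.cos (θ (pos2 n i)) = Real.Angle.cos (θ' (pos2 n i)) :=
        mul_left_cancel₀ hrvne (by linarith)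
      have hS1 : Real.Angle.sin (θ (pos1 n i)) = Real.Angle.sin (θ' (pos1 n i)) :=
        mul_left_cancel₀ hrune (by linarith)
      have hS2 : Real.Angle.sin (θ (pos2 n i)) = Real.Angle.sin (θ' (pos2 n i)) :=
        mul_left_cancel₀ hrvne (by linarith)
      exact ⟨angle_inj hC1 hS1, angle_inj hC2 hS2⟩
    funext k
    by_cases h : k.1 < (n - 1) / 2
    · exact (key ⟨k.1, h⟩).1
    · have hk2 := k.2
      have hk : pos2 n ⟨n - 2 - k.1, by omega⟩ = k := Fin.ext (by simp [pos2]; omega)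
      rw [← hk]
      exact (key _).2
  -- surjectivity
  have hsurj : ∀ x, Fmap n x = ab → ∃ θ, Phi n ab θ hn2 = x := by
    intro x hx
    have hN : ∀ i : Fin ((n - 1) / 2),
        (x.2 (pos1 n i))^2 + (x.2 (pos2 n i))^2 + (omg n (i.1+1))^2 * (x.1 (pos1 n i))^2
          + (omg n (i.1+1))^2 * (x.1 (pos2 n i))^2 = ab.1 i * (2 * omg n (i.1+1)) := by
      intro i
      have hA : aF n (i.1 + 1) x = ab.1 i := congrFun (congrArg Prod.fst hx) i
      unfold aF at hA
      rw [coord_pos1 n i, coord_pos2 n i, coord_pos1 n i, coord_pos2 n i] at hA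
      exact (div_eq_iff (by have := hw i; positivity)).mp hA
    have hB : ∀ i : Fin ((n - 1) / 2),
        x.2 (pos1 n i) * x.1 (pos2 n i) - x.2 (pos2 n i) * x.1 (pos1 n i) = ab.2 i := by
      intro i
      have h : bF n (i.1 + 1) x = ab.2 i := congrFun (congrArg Prod.snd hx) i
      unfold bF at h
      rwa [coord_pos1 n i, coord_pos2 n i, coord_pos1 n i, coord_pos2 n i] at h
    have hang1 : ∀ i : Fin ((n - 1) / 2), ∃ φ : Real.Angle,
        φ.cos = (x.2 (pos1 n i) - omg n (i.1+1) * x.1 (pos2 n i)) / (2 * ru n ab i) ∧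
        φ.sin = (omg n (i.1+1) * x.1 (pos1 n i) + x.2 (pos2 n i)) / (2 * ru n ab i) := by
      intro i
      apply angle_surj
      have hr := hrupos i
      rw [div_pow, div_pow, ← add_div, div_eq_one_iff_eq (by positivity)]
      linear_combination hN i - 2 * omg n (i.1+1) * hB i - 4 * hru2 i
    have hang2 : ∀ i : Fin ((n - 1) / 2), ∃ φ : Real.Angle,
        φ.cos = (x.2 (pos1 n i) + omg n (i.1+1) * x.1 (pos2 n i)) / (2 * rv n ab i) ∧
        φ.sin = (omg n (i.1+1) * x.1 (pos1 n i) - x.2 (pos2 n i)) / (2 * rv n ab i) := by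
      intro i
      apply angle_surj
      have hr := hrvpos i
      rw [div_pow, div_pow, ← add_div, div_eq_one_iff_eq (by positivity)]
      linear_combination hN i + 2 * omg n (i.1+1) * hB i - 4 * hrv2 i
    choose φ1 hφ1c hφ1s using hang1
    choose φ2 hφ2c hφ2s using hang2
    set θf : Fin (n - 1) → AddCircle (2 * Real.pi) := fun k =>
      if h : k.1 < (n - 1) / 2 then φ1 ⟨k.1, h⟩
      else φ2 ⟨n - 2 - k.1, by have := k.2; omega⟩ with hθf
    have hθ1 : ∀ i, θf (pos1 n i) = φ1 i := fun i => dif_pos i.2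
    have hθ2 : ∀ i, θf (pos2 n i) = φ2 i := by
      intro i
      have h2i := i.2
      simp only [hθf, pos2]
      exact (dif_neg (show ¬ (n - 2 - i.1 < (n - 1) / 2) by omega)).trans
        (congrArg φ2 (Fin.ext (show n - 2 - (n - 2 - i.1) = i.1 by omega)))
    refine ⟨θf, ?_⟩
    have comp1 : ∀ i : Fin ((n - 1) / 2),
        (Phi n ab θf hn2).1 (pos1 n i) = x.1 (pos1 n i) := by
      intro i
      rw [Phi_fst_pos1]
      simp only [Q1, hθ1, hθ2, hφ1s, hφ2s]
      have h1 := (hrupos i).ne'; have h2 := (hrvpos i).ne'; have h3 := (hw i).ne'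
      field_simp
      ring
    have comp2 : ∀ i : Fin ((n - 1) / 2),
        (Phi n ab θf hn2).1 (pos2 n i) = x.1 (pos2 n i) := by
      intro i
      rw [Phi_fst_pos2]
      simp only [Q2, hθ1, hθ2, hφ1c, hφ2c]
      have h1 := (hrupos i).ne'; have h2 := (hrvpos i).ne'; have h3 := (hw i).ne'
      field_simp
      ring
    have comp3 : ∀ i : Fin ((n - 1) / 2),
        (Phi n ab θf hn2).2 (pos1 n i) = x.2 (pos1 n i) := by
      intro i
      rw [Phi_snd_pos1]
      simp only [P1, hθ1, hθ2, hφ1c, hφ2c]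
      have h1 := (hrupos i).ne'; have h2 := (hrvpos i).ne'; have h3 := (hw i).ne'
      field_simp
      ring
    have comp4 : ∀ i : Fin ((n - 1) / 2),
        (Phi n ab θf hn2).2 (pos2 n i) = x.2 (pos2 n i) := by
      intro i
      rw [Phi_snd_pos2]
      simp only [P2, hθ1, hθ2, hφ1s, hφ2s]
      have h1 := (hrupos i).ne'; have h2 := (hrvpos i).ne'; have h3 := (hw i).ne'
      field_simp
      ring
    have hsplit : ∀ k : Fin (n - 1), (∃ i, k = pos1 n i) ∨ (∃ i, k = pos2 n i) := by
      intro k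
      have hk2 := k.2
      by_cases h : k.1 < (n - 1) / 2
      · exact Or.inl ⟨⟨k.1, h⟩, Fin.ext rfl⟩
      · exact Or.inr ⟨⟨n - 2 - k.1, by omega⟩, Fin.ext (by simp [pos2]; omega)⟩
    refine Prod.ext ?_ ?_ <;> funext k <;> rcases hsplit k with ⟨i, rfl⟩ | ⟨i, rfl⟩
    · exact comp1 i
    · exact comp2 i
    · exact comp3 i
    · exact comp4 i
  -- assemble
  let e : (Fin (n - 1) → AddCircle (2 * Real.pi)) ≃ (Fmap n ⁻¹' {ab} :
      Set ((Fin (n - 1) → ℝ) × (Fin (n - 1) → ℝ))) :=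
    Equiv.ofBijective (fun θ => ⟨Phi n ab θ hn2, hmem θ⟩)
      ⟨fun θ θ' h => hinj (congrArg Subtype.val h),
       fun x => by
        obtain ⟨θ, hθ⟩ := hsurj x.1 x.2
        exact ⟨θ, Subtype.ext hθ⟩⟩
  have hce : Continuous e := Continuous.subtype_mk hcont _
  exact ⟨(hce.homeoOfEquivCompactToT2).symm⟩
end
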